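/- (Lemma 3.1 at the level of the transformed coefficient matrix, with geometric constants.) Let J be an invertible 2×2 real matrix, r, s ∈ ℝ², and let φ(x) := J(x − r) + s. Let T' ⊆ ℝ² be Lebesgue measurable with T := φ(T'). Suppose there are ρ, ρ', κ, κ' > 0 and centers such that: a closed ball of radius ρ is contained in T and the diameter of T is at most κ; a closed ball of radius ρ' is contained in T' and the diameter of T' is at most κ'. Let a be a symmetric 2×2 real matrix with a_min ‖x‖² ≤ xᵀ a x ≤ a_max ‖x‖² for all x ∈ ℝ², where a_max ≥ a_min ≥ 0. Define A := |det J|⁻¹ · J a Jᵀ. Then for all v, w ∈ ℝ²: |vᵀ A w| ≤ a_max ( κ κ' / (ρ ρ') )² ‖v‖ ‖w‖, and vᵀ A v ≥ a_min ( ρ ρ' / (κ κ') )² ‖v‖². -/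

import Mathlib

/-!
A ball of radius `ρ'` in `T'` has antipodal points `c' ± ρ' u` whose images lie in `T`, at
distance `2ρ' ‖J u‖ ≤ κ`; hence `‖J‖ ≤ κ / (2ρ')`, and symmetrically `‖J⁻¹‖ ≤ κ' / (2ρ)`.
Comparing the Lebesgue measure of the unit ball with that of its image gives
`|det J| ≤ ‖J‖²` and `|det J|⁻¹ = |det J⁻¹| ≤ ‖J⁻¹‖²`. Since
`vᵀ A w = |det J|⁻¹ (Jᵀ v)ᵀ a (Jᵀ w)`, both bounds are then governed by the condition number
`‖J‖ ‖J⁻¹‖ ≤ κ κ' / (4 ρ ρ')`, using for the upper bound that the operator norm of the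
symmetric matrix `a` is its numerical radius, at most `a_max`.
-/

open Matrix MeasureTheory

/-- The bilinear pairing `vᵀ a w` on Euclidean `ℝ²`. -/
noncomputable def matQuad (a : Matrix (Fin 2) (Fin 2) ℝ)
    (v w : EuclideanSpace ℝ (Fin 2)) : ℝ :=
  inner ℝ v (Matrix.toEuclideanLin a w)

open Metric Set Module
open scoped Matrix.Norms.L2Operator RealInnerProductSpace

section Geometry
variable {E F : Type*} [NormedAddCommGroup E] [NormedSpace ℝ E] [NormedAddCommGroup F]
  [NormedSpace ℝ F]

theorem ContinuousLinearMap.opNorm_le_of_closedBall_subset_of_mapsTo (f : E →L[ℝ] F) (p : E)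
    (q : F) {S : Set E} {T : Set F} {c : E} {ρ κ : ℝ} (hρ : 0 < ρ) (hκ : 0 ≤ κ)
    (hball : closedBall c ρ ⊆ S) (hmaps : MapsTo (fun x ↦ f (x - p) + q) S T)
    (hdiam : Metric.ediam T ≤ ENNReal.ofReal κ) : ‖f‖ ≤ κ / (2 * ρ) := by
  refine f.opNorm_le_of_unit_norm (by positivity) fun x hx ↦ ?_
  have hmem : ∀ u : E, ‖u‖ ≤ ρ → f (c + u - p) + q ∈ T := fun u hu ↦
    hmaps (hball (by rwa [mem_closedBall, dist_eq_norm, add_sub_cancel_left]))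
  have hρx : ‖ρ • x‖ ≤ ρ := by rw [norm_smul, hx, Real.norm_of_nonneg hρ.le, mul_one]
  have hdist : dist (f (c + ρ • x - p) + q) (f (c + -(ρ • x) - p) + q) ≤ κ :=
    (edist_le_ofReal hκ).1 <| (Metric.edist_le_ediam_of_mem (hmem _ hρx)
      (hmem _ (by rwa [norm_neg]))).trans hdiam
  rw [le_div_iff₀ (by positivity)]
  calc ‖f x‖ * (2 * ρ) = dist (f (c + ρ • x - p) + q) (f (c + -(ρ • x) - p) + q) := by
        rw [dist_eq_norm, map_sub, map_sub, map_add, map_add, map_neg, map_smul,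
          show f c + ρ • f x - f p + q - (f c + -(ρ • f x) - f p + q) = (2 * ρ) • f x by module,
          norm_smul, Real.norm_of_nonneg (by positivity), mul_comm]
    _ ≤ κ := hdist

theorem ContinuousLinearMap.abs_det_le_opNorm_pow [FiniteDimensional ℝ E] (f : E →L[ℝ] E) :
    |LinearMap.det (f : E →ₗ[ℝ] E)| ≤ ‖f‖ ^ finrank ℝ E := by
  borelize E
  let μ : Measure E := Measure.addHaar
  have h0 : μ (ball 0 1) ≠ 0 := isOpen_ball.measure_ne_zero μ (nonempty_ball.2 one_pos)
  have htop : μ (ball 0 1) ≠ ⊤ := measure_ball_lt_top.ne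
  have himage : (f : E →ₗ[ℝ] E) '' ball 0 1 ⊆ closedBall 0 ‖f‖ := by
    rintro _ ⟨x, hx, rfl⟩
    rw [mem_ball_zero_iff] at hx
    rw [mem_closedBall_zero_iff]
    exact f.le_of_opNorm_le le_rfl x |>.trans (mul_le_of_le_one_right f.opNorm_nonneg hx.le)
  have := measure_mono (μ := μ) himage
  rw [Measure.addHaar_image_linearMap, Measure.addHaar_closedBall μ _ f.opNorm_nonneg,
    ENNReal.mul_le_mul_iff_left h0 htop] at this
  exact (ENNReal.ofReal_le_ofReal_iff (by positivity)).1 this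

end Geometry

theorem ContinuousLinearMap.opNorm_le_of_abs_inner_self_le {E : Type*} [NormedAddCommGroup E]
    [InnerProductSpace ℝ E] {T : E →L[ℝ] E} (hT : (T : E →ₗ[ℝ] E).IsSymmetric) {M : ℝ}
    (hM : 0 ≤ M) (h : ∀ x, |⟪T x, x⟫| ≤ M * ‖x‖ ^ 2) : ‖T‖ ≤ M := by
  rw [T.norm_eq_iSup_rayleighQuotient hT]
  refine ciSup_le fun x ↦ ?_
  rw [rayleighQuotient, reApplyInnerSelf_apply, abs_div, abs_sq]
  exact div_le_of_le_mul₀ (sq_nonneg _) hM (by simpa using h x)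

namespace Matrix
variable {n : Type*} [Fintype n] [DecidableEq n]

theorem abs_det_le_l2_opNorm_pow (M : Matrix n n ℝ) : |M.det| ≤ ‖M‖ ^ Fintype.card n := by
  have := (toEuclideanCLM (𝕜 := ℝ) M).abs_det_le_opNorm_pow
  rwa [coe_toEuclideanCLM_eq_toEuclideanLin, toEuclideanLin_eq_toLin_orthonormal,
    LinearMap.det_toLin, finrank_euclideanSpace] at this

theorem l2_opNorm_transpose (M : Matrix n n ℝ) : ‖Mᵀ‖ = ‖M‖ := by
  rw [← conjTranspose_eq_transpose_of_trivial, l2_opNorm_conjTranspose]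

theorem norm_toEuclideanLin_le (M : Matrix n n ℝ) (x : EuclideanSpace ℝ n) :
    ‖toEuclideanLin M x‖ ≤ ‖M‖ * ‖x‖ :=
  (toEuclideanCLM (𝕜 := ℝ) M).le_opNorm x

theorem toEuclideanLin_nonsing_inv_apply {J : Matrix n n ℝ} (hJ : IsUnit J.det)
    (x : EuclideanSpace ℝ n) : toEuclideanLin J⁻¹ (toEuclideanLin J x) = x := by
  simp [toLpLin_apply, nonsing_inv_mul J hJ]

theorem one_le_l2_opNorm_mul_l2_opNorm_inv [Nonempty n] {J : Matrix n n ℝ} (hJ : IsUnit J.det) :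
    1 ≤ ‖J‖ * ‖J⁻¹‖ := by
  simpa [mul_nonsing_inv J hJ] using norm_mul_le J J⁻¹

theorem norm_le_l2_opNorm_inv_mul_norm_toEuclideanLin_transpose {J : Matrix n n ℝ}
    (hJ : IsUnit J.det) (x : EuclideanSpace ℝ n) : ‖x‖ ≤ ‖J⁻¹‖ * ‖toEuclideanLin Jᵀ x‖ :=
  calc ‖x‖ = ‖toEuclideanLin Jᵀ⁻¹ (toEuclideanLin Jᵀ x)‖ := by
        rw [toEuclideanLin_nonsing_inv_apply (by rwa [det_transpose])]
    _ ≤ ‖J⁻¹‖ * ‖toEuclideanLin Jᵀ x‖ := by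
      rw [← l2_opNorm_transpose J⁻¹, transpose_nonsing_inv]; exact norm_toEuclideanLin_le _ _

theorem inner_toEuclideanLin_transpose (M : Matrix n n ℝ) (x y : EuclideanSpace ℝ n) :
    ⟪toEuclideanLin Mᵀ x, y⟫ = ⟪x, toEuclideanLin M y⟫ := by
  rw [← conjTranspose_eq_transpose_of_trivial, toEuclideanLin_conjTranspose_eq_adjoint,
    LinearMap.adjoint_inner_left]

theorem IsSymm.abs_inner_toEuclideanLin_le {a : Matrix n n ℝ} (ha : a.IsSymm) {M : ℝ}
    (hM : 0 ≤ M) (h : ∀ x, |⟪x, toEuclideanLin a x⟫| ≤ M * ‖x‖ ^ 2)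
    (v w : EuclideanSpace ℝ n) : |⟪v, toEuclideanLin a w⟫| ≤ M * ‖v‖ * ‖w‖ := by
  have hnorm : ‖a‖ ≤ M := (toEuclideanCLM (𝕜 := ℝ) a).opNorm_le_of_abs_inner_self_le
    (isSymmetric_toEuclideanLin_iff.2 ha) hM fun x ↦ by rw [real_inner_comm]; exact h x
  calc |⟪v, toEuclideanLin a w⟫| ≤ ‖v‖ * ‖toEuclideanLin a w‖ := abs_real_inner_le_norm _ _
    _ ≤ ‖v‖ * (M * ‖w‖) := by grw [norm_toEuclideanLin_le, hnorm]
    _ = M * ‖v‖ * ‖w‖ := by ring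

end Matrix

theorem matQuad_smul (c : ℝ) (a : Matrix (Fin 2) (Fin 2) ℝ) (v w : EuclideanSpace ℝ (Fin 2)) :
    matQuad (c • a) v w = c * matQuad a v w := by
  rw [matQuad, matQuad, map_smul, LinearMap.smul_apply, real_inner_smul_right]

theorem matQuad_mul_mul_transpose (J a : Matrix (Fin 2) (Fin 2) ℝ)
    (v w : EuclideanSpace ℝ (Fin 2)) :
    matQuad (J * a * Jᵀ) v w = matQuad a (toEuclideanLin Jᵀ v) (toEuclideanLin Jᵀ w) := by
  have hmul : toEuclideanLin (J * a * Jᵀ) w =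
      toEuclideanLin J (toEuclideanLin a (toEuclideanLin Jᵀ w)) := by
    simp [toLpLin_apply]
  rw [matQuad, matQuad, hmul, inner_toEuclideanLin_transpose]

variable {J a : Matrix (Fin 2) (Fin 2) ℝ}

theorem abs_matQuad_transformed_le (ha : a.IsSymm) {M : ℝ} (hM : 0 ≤ M)
    (h : ∀ x, |matQuad a x x| ≤ M * ‖x‖ ^ 2) (v w : EuclideanSpace ℝ (Fin 2)) :
    |matQuad (|J.det|⁻¹ • (J * a * Jᵀ)) v w| ≤ M * (‖J‖ * ‖J⁻¹‖) ^ 2 * ‖v‖ * ‖w‖ := by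
  have hdet : |J.det|⁻¹ ≤ ‖J⁻¹‖ ^ 2 := by
    simpa [det_nonsing_inv, Ring.inverse_eq_inv'] using abs_det_le_l2_opNorm_pow J⁻¹
  rw [matQuad_smul, matQuad_mul_mul_transpose, abs_mul, abs_inv, abs_abs]
  calc |J.det|⁻¹ * |matQuad a (toEuclideanLin Jᵀ v) (toEuclideanLin Jᵀ w)|
      ≤ ‖J⁻¹‖ ^ 2 * (M * (‖J‖ * ‖v‖) * (‖J‖ * ‖w‖)) := by
        grw [hdet, matQuad, ha.abs_inner_toEuclideanLin_le hM h, norm_toEuclideanLin_le,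
          norm_toEuclideanLin_le, l2_opNorm_transpose]
    _ = M * (‖J‖ * ‖J⁻¹‖) ^ 2 * ‖v‖ * ‖w‖ := by ring

theorem le_matQuad_transformed (hJ : IsUnit J.det) {m : ℝ} (hm : 0 ≤ m)
    (h : ∀ x, m * ‖x‖ ^ 2 ≤ matQuad a x x) (v : EuclideanSpace ℝ (Fin 2)) :
    m / (‖J‖ * ‖J⁻¹‖) ^ 2 * ‖v‖ ^ 2 ≤ matQuad (|J.det|⁻¹ • (J * a * Jᵀ)) v v := by
  have hdet_pos : 0 < |J.det| := abs_pos.2 hJ.ne_zero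
  have hdet : |J.det| ≤ ‖J‖ ^ 2 := by simpa using abs_det_le_l2_opNorm_pow J
  have hinv_pos : 0 < ‖J⁻¹‖ := pos_of_mul_pos_right
    (one_pos.trans_le (one_le_l2_opNorm_mul_l2_opNorm_inv hJ)) (norm_nonneg J)
  rw [matQuad_smul, matQuad_mul_mul_transpose]
  calc m / (‖J‖ * ‖J⁻¹‖) ^ 2 * ‖v‖ ^ 2
      ≤ m / (‖J‖ * ‖J⁻¹‖) ^ 2 * (‖J⁻¹‖ * ‖toEuclideanLin Jᵀ v‖) ^ 2 := by
        grw [norm_le_l2_opNorm_inv_mul_norm_toEuclideanLin_transpose hJ v]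
    _ = m / ‖J‖ ^ 2 * ‖toEuclideanLin Jᵀ v‖ ^ 2 := by field_simp
    _ ≤ m / |J.det| * ‖toEuclideanLin Jᵀ v‖ ^ 2 := by gcongr
    _ ≤ |J.det|⁻¹ * matQuad a (toEuclideanLin Jᵀ v) (toEuclideanLin Jᵀ v) := by
        rw [div_eq_inv_mul, mul_assoc]; gcongr; exact h _

theorem transformed_coefficient_geometric_bounds_general
    (J : Matrix (Fin 2) (Fin 2) ℝ) (hJ : IsUnit J.det)
    (r s : EuclideanSpace ℝ (Fin 2))
    (φ : EuclideanSpace ℝ (Fin 2) → EuclideanSpace ℝ (Fin 2))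
    (hφ : φ = fun x => Matrix.toEuclideanLin J (x - r) + s)
    (T' : Set (EuclideanSpace ℝ (Fin 2)))
    (T : Set (EuclideanSpace ℝ (Fin 2))) (hT : T = φ '' T')
    (ρ ρ' κ κ' : ℝ) (hρ : 0 < ρ) (hρ' : 0 < ρ') (hκ : 0 < κ) (hκ' : 0 < κ')
    (hballT : ∃ c : EuclideanSpace ℝ (Fin 2), Metric.closedBall c ρ ⊆ T)
    (hdiamT : EMetric.diam T ≤ ENNReal.ofReal κ)
    (hballT' : ∃ c' : EuclideanSpace ℝ (Fin 2), Metric.closedBall c' ρ' ⊆ T')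
    (hdiamT' : EMetric.diam T' ≤ ENNReal.ofReal κ')
    (a : Matrix (Fin 2) (Fin 2) ℝ) (hsymm : a.IsSymm)
    (a_min a_max : ℝ) (ha_min : 0 ≤ a_min) (ha : a_min ≤ a_max)
    (hlb : ∀ x : EuclideanSpace ℝ (Fin 2), a_min * ‖x‖ ^ 2 ≤ matQuad a x x)
    (hub : ∀ x : EuclideanSpace ℝ (Fin 2), matQuad a x x ≤ a_max * ‖x‖ ^ 2)
    (A : Matrix (Fin 2) (Fin 2) ℝ) (hA : A = |J.det|⁻¹ • (J * a * Jᵀ)) :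
    ∀ v w : EuclideanSpace ℝ (Fin 2),
      |matQuad A v w| ≤ a_max * ((κ * κ') / (ρ * ρ')) ^ 2 * ‖v‖ * ‖w‖ ∧
      a_min * ((ρ * ρ') / (κ * κ')) ^ 2 * ‖v‖ ^ 2 ≤ matQuad A v v := by
  subst hA hT hφ
  obtain ⟨c, hc⟩ := hballT
  obtain ⟨c', hc'⟩ := hballT'
  have hJ_le : ‖J‖ ≤ κ / (2 * ρ') :=
    (toEuclideanCLM (𝕜 := ℝ) J).opNorm_le_of_closedBall_subset_of_mapsTo r s hρ' hκ.le hc'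
      (mapsTo_image _ T') hdiamT
  have hJinv_le : ‖J⁻¹‖ ≤ κ' / (2 * ρ) := by
    refine (toEuclideanCLM (𝕜 := ℝ) J⁻¹).opNorm_le_of_closedBall_subset_of_mapsTo s r hρ hκ'.le
      hc ?_ hdiamT'
    rintro _ ⟨x, hx, rfl⟩
    show toEuclideanLin J⁻¹ (toEuclideanLin J (x - r) + s - s) + r ∈ T'
    rwa [add_sub_cancel_right, toEuclideanLin_nonsing_inv_apply hJ, sub_add_cancel]
  have hcond : ‖J‖ * ‖J⁻¹‖ ≤ κ * κ' / (ρ * ρ') := calc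
    ‖J‖ * ‖J⁻¹‖ ≤ κ / (2 * ρ') * (κ' / (2 * ρ)) := by gcongr
    _ ≤ κ * κ' / (ρ * ρ') := by field_simp; nlinarith [mul_pos hκ hκ']
  have hcond_ge_one := one_le_l2_opNorm_mul_l2_opNorm_inv hJ
  have ha_max : 0 ≤ a_max := ha_min.trans ha
  have habs : ∀ x, |matQuad a x x| ≤ a_max * ‖x‖ ^ 2 := fun x ↦ abs_le.2
    ⟨by nlinarith [hlb x, mul_nonneg ha_max (sq_nonneg ‖x‖)], hub x⟩
  refine fun v w ↦ ⟨?_, ?_⟩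
  · grw [abs_matQuad_transformed_le hsymm ha_max habs, hcond]
  · grw [← le_matQuad_transformed hJ ha_min hlb, hcond]
    exact le_of_eq (by field_simp)

/-- pointwise content of Lemma 3.1 with geometric constants:
continuity and coercivity bounds for the transformed coefficient
`A = |det J|⁻¹ J a Jᵀ` of the affine map `φ(x) = J(x − r) + s`, in terms of the
inscribed radii `ρ, ρ'` and diameters `κ, κ'` of `T = φ(T')` and `T'`. -/
theorem transformed_coefficient_geometric_bounds
    (J : Matrix (Fin 2) (Fin 2) ℝ) (hJ : IsUnit J.det)
    (r s : EuclideanSpace ℝ (Fin 2))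
    (φ : EuclideanSpace ℝ (Fin 2) → EuclideanSpace ℝ (Fin 2))
    (hφ : φ = fun x => Matrix.toEuclideanLin J (x - r) + s)
    (T' : Set (EuclideanSpace ℝ (Fin 2))) (hT'meas : MeasurableSet T')
    (T : Set (EuclideanSpace ℝ (Fin 2))) (hT : T = φ '' T')
    (ρ ρ' κ κ' : ℝ) (hρ : 0 < ρ) (hρ' : 0 < ρ') (hκ : 0 < κ) (hκ' : 0 < κ')
    (hballT : ∃ c : EuclideanSpace ℝ (Fin 2), Metric.closedBall c ρ ⊆ T)
    (hdiamT : EMetric.diam T ≤ ENNReal.ofReal κ)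
    (hballT' : ∃ c' : EuclideanSpace ℝ (Fin 2), Metric.closedBall c' ρ' ⊆ T')
    (hdiamT' : EMetric.diam T' ≤ ENNReal.ofReal κ')
    (a : Matrix (Fin 2) (Fin 2) ℝ) (hsymm : a.IsSymm)
    (a_min a_max : ℝ) (ha_min : 0 ≤ a_min) (ha : a_min ≤ a_max)
    (hlb : ∀ x : EuclideanSpace ℝ (Fin 2), a_min * ‖x‖ ^ 2 ≤ matQuad a x x)
    (hub : ∀ x : EuclideanSpace ℝ (Fin 2), matQuad a x x ≤ a_max * ‖x‖ ^ 2)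
    (A : Matrix (Fin 2) (Fin 2) ℝ) (hA : A = |J.det|⁻¹ • (J * a * Jᵀ)) :
    ∀ v w : EuclideanSpace ℝ (Fin 2),
      |matQuad A v w| ≤ a_max * ((κ * κ') / (ρ * ρ')) ^ 2 * ‖v‖ * ‖w‖ ∧
      a_min * ((ρ * ρ') / (κ * κ')) ^ 2 * ‖v‖ ^ 2 ≤ matQuad A v v :=
  transformed_coefficient_geometric_bounds_general J hJ r s φ hφ T' T hT ρ ρ' κ κ' hρ hρ' hκ hκ'
    hballT hdiamT hballT' hdiamT' a hsymm a_min a_max ha_min ha hlb hub A hA
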